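/- Let A ∈ ℝ^{n×n}, B ∈ ℝ^{n×p}, F ∈ ℝ^{r×n}, t₁ > 0, and suppose M := F·W_c(t₁)·Fᵀ is invertible (so M is symmetric positive definite). Then the maximum target control energy satisfies sup over z* ∈ ℝ^r with ‖z*‖ = 1 of (inf over continuous controls u with F·∫₀^{t₁} exp(A(t₁−τ))·B·u(τ) dτ = z* of ∫₀^{t₁} ‖u(t)‖² dt) = 1 / λ_min(M), where λ_min(M) is the smallest eigenvalue of M. -/

import Mathlib

/-!
With `G τ = F exp((t₁ - τ)A) B`, the target reached by a control `u` is `∫₀^{t₁} G u`, and the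
change of variables `s = t₁ - τ` turns `∫₀^{t₁} G Gᵀ` into `M = F W_c(t₁) Fᵀ`. The control
`u* = Gᵀ M⁻¹ z` reaches `z` with energy `zᵀ M⁻¹ z`, and any other control reaching `z` differs
from `u*` by a function `L²`-orthogonal to `u*`, so `zᵀ M⁻¹ z` is the minimum energy.
For a unit `z` and `w = M⁻¹ z`, the Rayleigh bound gives `λ_min ‖w‖² ≤ wᵀ M w = ⟨w, z⟩ ≤ ‖w‖`,
hence `zᵀ M⁻¹ z ≤ 1 / λ_min`, with equality at a unit eigenvector for `λ_min`.
-/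

open Matrix intervalIntegral
/-- Controllability matrix of the pair `(A, B)`: the horizontal block concatenation of
`B, A*B, A²*B, …, A^(n-1)*B`, indexed so that entry `(i, (k, j))` is `(A^k * B) i j`. -/
noncomputable def ctrbMat {n p : ℕ} (A : Matrix (Fin n) (Fin n) ℝ)
    (B : Matrix (Fin n) (Fin p) ℝ) : Matrix (Fin n) (Fin n × Fin p) ℝ :=
  fun i kj => (A ^ (kj.1 : ℕ) * B) i kj.2

/-- Controllability Gramian `W_c(t₁) = ∫₀^{t₁} exp(As) B Bᵀ exp(Aᵀs) ds` (entrywise integral). -/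
noncomputable def ctrbGram {n p : ℕ} (A : Matrix (Fin n) (Fin n) ℝ)
    (B : Matrix (Fin n) (Fin p) ℝ) (t₁ : ℝ) : Matrix (Fin n) (Fin n) ℝ :=
  fun i j => ∫ s in (0:ℝ)..t₁,
    (NormedSpace.exp (s • A) * B * Bᵀ * NormedSpace.exp (s • Aᵀ)) i j

section Spectral

variable {n : Type*} [Fintype n] [DecidableEq n] {A : Matrix n n ℝ}

theorem Matrix.IsHermitian.posSemidef_sub_iInf_eigenvalues_smul_one (hA : A.IsHermitian) :
    (A - (⨅ i, hA.eigenvalues i) • (1 : Matrix n n ℝ)).PosSemidef := by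
  refine posSemidef_iff_isHermitian_and_spectrum_nonneg.2
    ⟨hA.sub (isHermitian_one.smul (IsSelfAdjoint.all _)), ?_⟩
  rw [← Algebra.algebraMap_eq_smul_one, ← spectrum.sub_singleton_eq,
    hA.spectrum_real_eq_range_eigenvalues]
  rintro _ ⟨_, ⟨i, rfl⟩, _, rfl, rfl⟩
  exact sub_nonneg.2 (ciInf_le (Set.finite_range hA.eigenvalues).bddBelow i)

theorem Matrix.IsHermitian.iInf_eigenvalues_mul_dotProduct_le (hA : A.IsHermitian) (x : n → ℝ) :
    (⨅ i, hA.eigenvalues i) * (x ⬝ᵥ x) ≤ x ⬝ᵥ (A *ᵥ x) := by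
  have h := hA.posSemidef_sub_iInf_eigenvalues_smul_one.dotProduct_mulVec_nonneg x
  rw [star_trivial, sub_mulVec, smul_mulVec, one_mulVec, dotProduct_sub, dotProduct_smul,
    smul_eq_mul] at h
  linarith

theorem Matrix.PosDef.inv_mulVec_dotProduct_le (hA : A.PosDef) {z : n → ℝ} (hz : z ⬝ᵥ z = 1) :
    (A⁻¹ *ᵥ z) ⬝ᵥ z ≤ 1 / ⨅ i, hA.isHermitian.eigenvalues i := by
  have : Nonempty n := by
    by_contra h
    rw [not_nonempty_iff] at h
    simp [dotProduct] at hz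
  obtain ⟨i₀, hi₀⟩ := exists_eq_ciInf_of_finite (f := hA.isHermitian.eigenvalues)
  have hmin : 0 < ⨅ i, hA.isHermitian.eigenvalues i := hi₀ ▸ hA.eigenvalues_pos i₀
  set w := A⁻¹ *ᵥ z
  have hAw : A *ᵥ w = z := by
    rw [mulVec_mulVec, mul_nonsing_inv _ ((isUnit_iff_isUnit_det A).1 hA.isUnit), one_mulVec]
  have hray := hA.isHermitian.iInf_eigenvalues_mul_dotProduct_le w
  rw [hAw] at hray
  have hcs : (w ⬝ᵥ z) ^ 2 ≤ w ⬝ᵥ w := calc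
    (w ⬝ᵥ z) ^ 2 ≤ (w ⬝ᵥ w) * (z ⬝ᵥ z) := by
      simpa [dotProduct, pow_two] using Finset.sum_mul_sq_le_sq_mul_sq Finset.univ w z
    _ = w ⬝ᵥ w := by rw [hz, mul_one]
  rcases le_or_gt (w ⬝ᵥ z) 0 with hq | hq
  · exact hq.trans (by positivity)
  · rw [le_div_iff₀ hmin]
    nlinarith [mul_le_mul_of_nonneg_left hcs hmin.le]

theorem Matrix.PosDef.sSup_inv_mulVec_dotProduct_eq (hA : A.PosDef) :
    sSup {E | ∃ z : n → ℝ, √(z ⬝ᵥ z) = 1 ∧ E = (A⁻¹ *ᵥ z) ⬝ᵥ z} =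
      1 / ⨅ i, hA.isHermitian.eigenvalues i := by
  rcases isEmpty_or_nonempty n with hn | hn
  · have hempty : {E | ∃ z : n → ℝ, √(z ⬝ᵥ z) = 1 ∧ E = (A⁻¹ *ᵥ z) ⬝ᵥ z} = ∅ := by
      simp [dotProduct, Finset.univ_eq_empty]
    rw [hempty, Real.sSup_empty, Real.iInf_of_isEmpty, div_zero]
  obtain ⟨i₀, hi₀⟩ := exists_eq_ciInf_of_finite (f := hA.isHermitian.eigenvalues)
  set v : n → ℝ := ⇑(hA.isHermitian.eigenvectorBasis i₀)
  have hv : v ⬝ᵥ v = 1 := by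
    have h := real_inner_self_eq_norm_sq (hA.isHermitian.eigenvectorBasis i₀)
    rwa [hA.isHermitian.eigenvectorBasis.orthonormal.1 i₀, one_pow,
      EuclideanSpace.inner_eq_star_dotProduct, star_trivial] at h
  have hAv : A *ᵥ v = (⨅ i, hA.isHermitian.eigenvalues i) • v :=
    hi₀ ▸ hA.isHermitian.mulVec_eigenvectorBasis i₀
  have hA'v : A⁻¹ *ᵥ v = (⨅ i, hA.isHermitian.eigenvalues i)⁻¹ • v := by
    have hmin : (⨅ i, hA.isHermitian.eigenvalues i) ≠ 0 := hi₀ ▸ (hA.eigenvalues_pos i₀).ne'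
    rw [← inv_smul_smul₀ hmin (A⁻¹ *ᵥ v), ← mulVec_smul, ← hAv, mulVec_mulVec,
      nonsing_inv_mul _ ((isUnit_iff_isUnit_det A).1 hA.isUnit), one_mulVec]
  refine IsGreatest.csSup_eq ⟨⟨v, by rw [hv, Real.sqrt_one], ?_⟩, ?_⟩
  · rw [hA'v, smul_dotProduct, hv, smul_eq_mul, mul_one, one_div]
  · rintro _ ⟨z, hz, rfl⟩
    exact hA.inv_mulVec_dotProduct_le (Real.sqrt_eq_one.1 hz)

end Spectral

namespace LinearControl

variable {l m k : Type*} [Fintype k]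

noncomputable def response (G : ℝ → Matrix m k ℝ) (a b : ℝ) (u : ℝ → k → ℝ) : m → ℝ :=
  fun i => ∫ τ in a..b, (G τ *ᵥ u τ) i

noncomputable def gramian (G : ℝ → Matrix m k ℝ) (a b : ℝ) : Matrix m m ℝ :=
  fun i j => ∫ τ in a..b, (G τ * (G τ)ᵀ) i j

noncomputable def energy (a b : ℝ) (u : ℝ → k → ℝ) : ℝ :=
  ∫ τ in a..b, u τ ⬝ᵥ u τ

theorem integral_dotProduct (v : k → ℝ) {f : ℝ → k → ℝ} (hf : Continuous f) (a b : ℝ) :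
    ∫ τ in a..b, v ⬝ᵥ f τ = v ⬝ᵥ fun i => ∫ τ in a..b, f τ i := by
  simp only [dotProduct]
  rw [integral_finsetSum (f := fun i τ => v i * f τ i) fun i _ =>
    (continuous_const.mul ((continuous_apply i).comp hf)).intervalIntegrable a b]
  simp only [integral_const_mul]

theorem integral_mulVec_apply (P : Matrix m k ℝ) {f : ℝ → k → ℝ} (hf : Continuous f) (a b : ℝ)
    (i : m) : ∫ τ in a..b, (P *ᵥ f τ) i = (P *ᵥ fun j => ∫ τ in a..b, f τ j) i :=
  integral_dotProduct (P i) hf a b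

theorem integral_mulVec_const_apply {X : ℝ → Matrix m k ℝ} (hX : Continuous X) (w : k → ℝ)
    (a b : ℝ) (i : m) :
    ∫ τ in a..b, (X τ *ᵥ w) i = ((fun i j => ∫ τ in a..b, X τ i j) *ᵥ w) i := by
  simp only [mulVec, dotProduct_comm _ w]
  exact integral_dotProduct w (continuous_pi fun j => hX.matrix_elem i j) a b

variable [Fintype m] {G : ℝ → Matrix m k ℝ} {a b : ℝ}

theorem dotProduct_response (hG : Continuous G) {u : ℝ → k → ℝ} (hu : Continuous u)
    (w : m → ℝ) : w ⬝ᵥ response G a b u = ∫ τ in a..b, ((G τ)ᵀ *ᵥ w) ⬝ᵥ u τ := by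
  unfold response
  rw [← integral_dotProduct w (hG.matrix_mulVec hu)]
  simp only [dotProduct_mulVec, mulVec_transpose]

theorem response_transpose_mulVec (hG : Continuous G) (w : m → ℝ) :
    response G a b (fun τ => (G τ)ᵀ *ᵥ w) = gramian G a b *ᵥ w := by
  funext i
  simp only [response, mulVec_mulVec]
  exact integral_mulVec_const_apply (hG.matrix_mul hG.matrix_transpose) w a b i

theorem energy_transpose_mulVec (hG : Continuous G) (w : m → ℝ) :
    energy a b (fun τ => (G τ)ᵀ *ᵥ w) = w ⬝ᵥ (gramian G a b *ᵥ w) := by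
  rw [← response_transpose_mulVec hG,
    dotProduct_response hG (hG.matrix_transpose.matrix_mulVec continuous_const)]
  rfl

theorem energy_nonneg (hab : a ≤ b) (u : ℝ → k → ℝ) : 0 ≤ energy a b u :=
  integral_nonneg hab fun τ _ => Finset.sum_nonneg fun i _ => mul_self_nonneg (u τ i)

theorem energy_sub {u v : ℝ → k → ℝ} (hu : Continuous u) (hv : Continuous v) :
    energy a b (u - v) = energy a b u - 2 * (∫ τ in a..b, v τ ⬝ᵥ u τ) + energy a b v := by
  have hint {f g : ℝ → k → ℝ} (hf : Continuous f) (hg : Continuous g) :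
      IntervalIntegrable (fun τ => f τ ⬝ᵥ g τ) MeasureTheory.volume a b :=
    (hf.dotProduct hg).intervalIntegrable a b
  have hpt (τ : ℝ) :
      (u - v) τ ⬝ᵥ (u - v) τ = u τ ⬝ᵥ u τ - 2 * (v τ ⬝ᵥ u τ) + v τ ⬝ᵥ v τ := by
    simp only [Pi.sub_apply, sub_dotProduct, dotProduct_sub, dotProduct_comm (u τ) (v τ)]
    ring
  simp only [energy, hpt]
  rw [integral_add ((hint hu hu).sub ((hint hv hu).const_mul 2)) (hint hv hv),
    integral_sub (hint hu hu) ((hint hv hu).const_mul 2), integral_const_mul]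

theorem energy_le_of_response_eq (hG : Continuous G) (hab : a ≤ b) (w : m → ℝ)
    {u : ℝ → k → ℝ} (hu : Continuous u)
    (hresp : response G a b u = response G a b (fun τ => (G τ)ᵀ *ᵥ w)) :
    energy a b (fun τ => (G τ)ᵀ *ᵥ w) ≤ energy a b u := by
  have hv : Continuous fun τ => (G τ)ᵀ *ᵥ w := hG.matrix_transpose.matrix_mulVec continuous_const
  have hcross : ∫ τ in a..b, ((G τ)ᵀ *ᵥ w) ⬝ᵥ u τ = energy a b (fun τ => (G τ)ᵀ *ᵥ w) := by
    rw [← dotProduct_response hG hu, hresp, dotProduct_response hG hv]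
    rfl
  have := energy_nonneg hab (u - fun τ => (G τ)ᵀ *ᵥ w)
  rw [energy_sub hu hv, hcross] at this
  linarith

theorem sInf_energy_eq [DecidableEq m] (hG : Continuous G) (hab : a ≤ b)
    (hM : IsUnit (gramian G a b)) (z : m → ℝ) :
    sInf {e | ∃ u : ℝ → k → ℝ, Continuous u ∧ response G a b u = z ∧ e = energy a b u} =
      ((gramian G a b)⁻¹ *ᵥ z) ⬝ᵥ z := by
  set w := (gramian G a b)⁻¹ *ᵥ z
  have hresp : response G a b (fun τ => (G τ)ᵀ *ᵥ w) = z := by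
    rw [response_transpose_mulVec hG, mulVec_mulVec,
      mul_nonsing_inv _ ((isUnit_iff_isUnit_det _).1 hM), one_mulVec]
  have henergy : energy a b (fun τ => (G τ)ᵀ *ᵥ w) = w ⬝ᵥ z := by
    rw [energy_transpose_mulVec hG, ← response_transpose_mulVec hG, hresp]
  refine IsLeast.csInf_eq
    ⟨⟨_, hG.matrix_transpose.matrix_mulVec continuous_const, hresp, henergy.symm⟩, ?_⟩
  rintro _ ⟨u, hu, hz, rfl⟩
  exact henergy ▸ energy_le_of_response_eq hG hab w hu (hz.trans hresp.symm)

theorem posSemidef_gramian (hG : Continuous G) (hab : a ≤ b) : (gramian G a b).PosSemidef := by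
  refine .of_dotProduct_mulVec_nonneg ?_ fun x => ?_
  · ext i j
    simp only [conjTranspose_apply, star_trivial, gramian]
    congr 1
    funext τ
    rw [← transpose_apply (G τ * (G τ)ᵀ), transpose_mul, transpose_transpose]
  · rw [star_trivial, ← energy_transpose_mulVec hG]
    exact energy_nonneg hab _

theorem mulVec_response (P : Matrix l m ℝ) (hG : Continuous G) {u : ℝ → k → ℝ}
    (hu : Continuous u) : P *ᵥ response G a b u = response (fun τ => P * G τ) a b u := by
  funext i
  simp only [response, ← mulVec_mulVec]
  exact (integral_mulVec_apply P (hG.matrix_mulVec hu) a b i).symm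

theorem gramian_mul_left (P : Matrix l m ℝ) (hG : Continuous G) :
    gramian (fun τ => P * G τ) a b = P * gramian G a b * Pᵀ := by
  ext i j
  have hGG := hG.matrix_mul hG.matrix_transpose
  have h (X : Matrix m m ℝ) : (P * X * Pᵀ) i j = (P *ᵥ (X *ᵥ P j)) i := by
    rw [mulVec_mulVec]; rfl
  calc gramian (fun τ => P * G τ) a b i j
      = ∫ τ in a..b, (P *ᵥ ((G τ * (G τ)ᵀ) *ᵥ P j)) i := by
        simp only [gramian, transpose_mul, ← h, Matrix.mul_assoc]
    _ = (P *ᵥ fun k => ∫ τ in a..b, ((G τ * (G τ)ᵀ) *ᵥ P j) k) i :=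
        integral_mulVec_apply P (hGG.matrix_mulVec continuous_const) a b i
    _ = (P * gramian G a b * Pᵀ) i j := by
        simp only [h, integral_mulVec_const_apply hGG]
        rfl

end LinearControl

section

attribute [local instance] Matrix.linftyOpNormedRing Matrix.linftyOpNormedAlgebra

theorem Matrix.continuous_exp_smul {n : Type*} [Fintype n] [DecidableEq n] (A : Matrix n n ℝ) :
    Continuous fun s : ℝ => NormedSpace.exp (s • A) :=
  NormedSpace.exp_continuous.comp (continuous_id.smul continuous_const)

end

open LinearControl

theorem gramian_exp_sub_smul_mul_eq_ctrbGram {n p : ℕ} (A : Matrix (Fin n) (Fin n) ℝ)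
    (B : Matrix (Fin n) (Fin p) ℝ) (t₁ : ℝ) :
    gramian (fun τ => NormedSpace.exp ((t₁ - τ) • A) * B) 0 t₁ = ctrbGram A B t₁ := by
  ext i j
  have h (s : ℝ) : NormedSpace.exp (s • A) * B * (NormedSpace.exp (s • A) * B)ᵀ =
      NormedSpace.exp (s • A) * B * Bᵀ * NormedSpace.exp (s • Aᵀ) := by
    simp only [transpose_mul, ← exp_transpose, transpose_smul, Matrix.mul_assoc]
  simp only [gramian, ctrbGram, h]
  simpa using integral_comp_sub_left (a := 0) (b := t₁)
    (fun s => (NormedSpace.exp (s • A) * B * Bᵀ * NormedSpace.exp (s • Aᵀ)) i j) t₁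

/-- **Maximum target control energy.** If `M = F·W_c(t₁)·Fᵀ` is invertible (hence
symmetric positive definite), then the supremum over unit target states `z*`
(Euclidean norm 1) of the minimum energy of a continuous control steering the target
vector from `0` to `z*` in time `t₁` equals `1 / λ_min(M)`. -/
theorem max_target_control_energy {n p r : ℕ}
    (A : Matrix (Fin n) (Fin n) ℝ) (B : Matrix (Fin n) (Fin p) ℝ)
    (F : Matrix (Fin r) (Fin n) ℝ) (t₁ : ℝ) (ht₁ : 0 < t₁)
    (hM : IsUnit (F * ctrbGram A B t₁ * Fᵀ))
    (hHerm : (F * ctrbGram A B t₁ * Fᵀ).IsHermitian) :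
    sSup { E : ℝ | ∃ z : Fin r → ℝ, Real.sqrt (z ⬝ᵥ z) = 1 ∧
        E = sInf { e : ℝ | ∃ u : ℝ → Fin p → ℝ, Continuous u ∧
          F.mulVec (fun i => ∫ τ in (0:ℝ)..t₁,
            (NormedSpace.exp ((t₁ - τ) • A) * B).mulVec (u τ) i) = z ∧
          e = ∫ t in (0:ℝ)..t₁, u t ⬝ᵥ u t } } =
      1 / (⨅ i, hHerm.eigenvalues i) := by
  have hG : Continuous fun τ : ℝ => NormedSpace.exp ((t₁ - τ) • A) * B :=
    ((continuous_exp_smul A).comp (continuous_const.sub continuous_id)).matrix_mul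
      continuous_const
  have hFG : Continuous fun τ : ℝ => F * (NormedSpace.exp ((t₁ - τ) • A) * B) :=
    continuous_const.matrix_mul hG
  have hgram : gramian (fun τ => F * (NormedSpace.exp ((t₁ - τ) • A) * B)) 0 t₁ =
      F * ctrbGram A B t₁ * Fᵀ := by
    rw [gramian_mul_left F hG, gramian_exp_sub_smul_mul_eq_ctrbGram]
  have hinf (z : Fin r → ℝ) :
      sInf {e | ∃ u : ℝ → Fin p → ℝ, Continuous u ∧
        F *ᵥ response (fun τ => NormedSpace.exp ((t₁ - τ) • A) * B) 0 t₁ u = z ∧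
          e = energy 0 t₁ u} = ((F * ctrbGram A B t₁ * Fᵀ)⁻¹ *ᵥ z) ⬝ᵥ z := by
    rw [← hgram, ← sInf_energy_eq hFG ht₁.le (hgram ▸ hM)]
    congr 1
    ext e
    refine exists_congr fun u => and_congr_right fun hu => ?_
    rw [mulVec_response F hG hu]
  unfold response energy at hinf
  simp only [hinf]
  have hpos : (F * ctrbGram A B t₁ * Fᵀ).PosDef :=
    (hgram ▸ posSemidef_gramian hFG ht₁.le).posDef_iff_isUnit.2 hM
  exact hpos.sSup_inv_mulVec_dotProduct_eq
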